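/- Let N ≥ 2, Λ₁ = √3, Λ_i > 0 for 2 ≤ i ≤ N, and points x̃₁ = 0, x̃₂, …, x̃_N ∈ ℝ³ with |x̃₂| = 1 and |x̃_i| ≥ 1 for all i ≥ 2. Let H̃ be harmonic on the ball B₀(R) (R > 2) and suppose G̃(x) = Σ_{i=1}^N Λ_i/|x − x̃_i| + H̃(x) ≥ 0 on B₀(R) ∖ {x̃₁,…,x̃_N}. Then Σ_{i=2}^N Λ_i/|x̃_i| + H̃(0) ≥ Λ₂ − √3/R − Λ₂/(R−1). In particular, if Σ_{i=2}^N Λ_i/|x̃_i| + H̃(0) = 0 and R is large enough, a contradiction arises. -/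

import Mathlib

/-!
Removing the poles at `xt 0 = 0` and `xt 1` from `G̃` leaves
`u = ∑_{i ≥ 2} Λᵢ / ‖x - xt i‖ + H̃`. Each `1 / ‖x - p‖` is harmonic in dimension three, so `u` is
superharmonic off its poles, and near a pole it is large because `Λᵢ > 0`. On a sphere `‖x‖ = r < R`
the nonnegativity of `G̃` gives `u ≥ -√3 / r - Λ₁ / (r - 1)`. The minimum principle, applied on the
ball of radius `r` with small balls around the remaining poles cut out, carries this bound to
`x = 0`; then let `r → R` and add back `Λ₁ / ‖xt 1‖ = Λ₁`.

The minimum principle is the usual perturbation argument: `u - ε ‖x‖²` has negative Laplacian, so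
it has no interior local minimum, and `ε → 0` at the end.
-/

open Metric

open Filter Topology Laplacian InnerProductSpace Module
open scoped RealInnerProductSpace

theorem ContinuousAt.le_of_forall_mem_Ioo_le {f : ℝ → ℝ} {a b c : ℝ} (hf : ContinuousAt f b)
    (hab : a < b) (h : ∀ x ∈ Set.Ioo a b, f x ≤ c) : f b ≤ c :=
  le_of_tendsto (hf.tendsto.mono_left nhdsWithin_le_nhds)
    (Filter.eventually_of_mem (Ioo_mem_nhdsLT hab) h)

theorem IsLocalMin.nonneg_of_hasDerivAt_of_hasDerivAt {f f' : ℝ → ℝ} {a c : ℝ}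
    (h : IsLocalMin f a) (hf : ∀ᶠ t in 𝓝 a, HasDerivAt f (f' t) t) (hf' : HasDerivAt f' c a) :
    0 ≤ c := by
  by_contra! hc
  have hderiv : deriv f =ᶠ[𝓝 a] f' := hf.mono fun t ht => ht.deriv
  have hmax : IsLocalMax f a :=
    isLocalMax_of_deriv_deriv_neg ((hf'.congr_of_eventuallyEq hderiv).deriv ▸ hc)
      h.deriv_eq_zero hf.self_of_nhds.continuousAt
  have hconst : f =ᶠ[𝓝 a] fun _ => f a := (h.and hmax).mono fun t ht => le_antisymm ht.2 ht.1
  have hzero : f' =ᶠ[𝓝 a] fun _ => 0 := by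
    filter_upwards [hf, hconst.eventuallyEq_nhds] with t ht htc
    rw [← ht.deriv, htc.deriv_eq, deriv_const]
  exact hc.ne' ((hasDerivAt_const a (0 : ℝ)).unique (hf'.congr_of_eventuallyEq hzero.symm))

theorem IsLocalMin.fderiv_fderiv_apply_nonneg {F : Type*} [NormedAddCommGroup F] [NormedSpace ℝ F]
    {f : F → ℝ} {x : F} (h : IsLocalMin f x) (hf : ContDiffAt ℝ 2 f x) (v : F) :
    0 ≤ fderiv ℝ (fun y => fderiv ℝ f y v) x v := by
  set γ : ℝ → F := fun t => x + t • v
  have hγ : ∀ t, HasDerivAt γ v t := fun t =>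
    (((hasDerivAt_id t).smul_const v).const_add x).congr_deriv (one_smul ℝ v)
  have hγ0 : γ 0 = x := by simp [γ]
  have hγx : Tendsto γ (𝓝 0) (𝓝 x) := hγ0 ▸ (hγ 0).continuousAt.tendsto
  have hdiff : ∀ᶠ y in 𝓝 x, DifferentiableAt ℝ f y :=
    (hf.eventually (by simp)).mono fun y hy => hy.differentiableAt (by simp)
  have hf' : DifferentiableAt ℝ (fun y => fderiv ℝ f y v) x :=
    ((hf.fderiv_right (m := 1) (by norm_num)).differentiableAt (by simp)).clm_apply
      (differentiableAt_const v)
  rw [← hγ0] at h hf' ⊢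
  refine (h.comp_continuous (hγ 0).continuousAt).nonneg_of_hasDerivAt_of_hasDerivAt
    ?_ (hf'.hasFDerivAt.comp_hasDerivAt 0 (hγ 0))
  filter_upwards [hγx.eventually hdiff] with t ht
  exact ht.hasFDerivAt.comp_hasDerivAt t (hγ t)

section Laplacian

variable {E : Type*} [NormedAddCommGroup E] [InnerProductSpace ℝ E] {x : E}

theorem contDiffAt_inv_norm_sub {n : WithTop ℕ∞} {p : E} (hx : x ≠ p) :
    ContDiffAt ℝ n (fun y => ‖y - p‖⁻¹) x :=
  ((contDiffAt_norm ℝ (sub_ne_zero.2 hx)).comp x (contDiffAt_id.sub contDiffAt_const)).inv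
    (norm_ne_zero_iff.2 (sub_ne_zero.2 hx))

variable [FiniteDimensional ℝ E] {f : E → ℝ}

theorem ContDiffAt.laplacian_eq_sum_fderiv_apply {ι : Type*} [Fintype ι]
    (hf : ContDiffAt ℝ 2 f x) (b : OrthonormalBasis ι ℝ E) :
    Δ f x = ∑ i, fderiv ℝ (fun y => fderiv ℝ f y (b i)) x (b i) := by
  have hf' : DifferentiableAt ℝ (fderiv ℝ f) x :=
    (hf.fderiv_right (m := 1) (by norm_num)).differentiableAt (by simp)
  simp [laplacian_eq_iteratedFDeriv_orthonormalBasis f b, iteratedFDeriv_two_apply,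
    fderiv_clm_apply hf' (differentiableAt_const _)]

theorem IsLocalMin.laplacian_nonneg (h : IsLocalMin f x) (hf : ContDiffAt ℝ 2 f x) :
    0 ≤ Δ f x := by
  rw [hf.laplacian_eq_sum_fderiv_apply (stdOrthonormalBasis ℝ E)]
  exact Finset.sum_nonneg fun i _ => h.fderiv_fderiv_apply_nonneg hf _

theorem laplacian_sum {F ι : Type*} [NormedAddCommGroup F] [NormedSpace ℝ F] {u : Finset ι}
    {f : ι → E → F} (h : ∀ j ∈ u, ContDiffAt ℝ 2 (f j) x) :
    Δ (fun y => ∑ j ∈ u, f j y) x = ∑ j ∈ u, Δ (f j) x := by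
  simp [laplacian_eq_iteratedFDeriv_stdOrthonormalBasis, iteratedFDeriv_fun_sum_apply h,
    Finset.sum_comm (γ := ι)]

theorem laplacian_comp_norm_sub_sq {φ φ' : ℝ → ℝ} {φ'' : ℝ} (p : E)
    (hφ : ContDiffAt ℝ 2 φ (‖x - p‖ ^ 2))
    (hφ' : ∀ᶠ s in 𝓝 (‖x - p‖ ^ 2), HasDerivAt φ (φ' s) s)
    (hφ'' : HasDerivAt φ' φ'' (‖x - p‖ ^ 2)) :
    Δ (fun y => φ (‖y - p‖ ^ 2)) x =
      4 * ‖x - p‖ ^ 2 * φ'' + 2 * finrank ℝ E * φ' (‖x - p‖ ^ 2) := by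
  set q : E → ℝ := fun y => ‖y - p‖ ^ 2
  have hq : ∀ y, HasFDerivAt q (2 • (innerSL ℝ (y - p)).comp (ContinuousLinearMap.id ℝ E)) y :=
    fun y => ((hasFDerivAt_id y).sub_const p).norm_sq
  have hqx : Tendsto q (𝓝 x) (𝓝 (‖x - p‖ ^ 2)) := (hq x).continuousAt.tendsto
  have hg : ContDiffAt ℝ 2 (φ ∘ q) x :=
    hφ.comp x ((contDiff_norm_sq ℝ).comp (contDiff_id.sub contDiff_const)).contDiffAt
  change Δ (φ ∘ q) x = _
  set b := stdOrthonormalBasis ℝ E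
  rw [hg.laplacian_eq_sum_fderiv_apply b]
  have hdir : ∀ v, fderiv ℝ (fun y => fderiv ℝ (φ ∘ q) y v) x v =
      4 * φ'' * ⟪x - p, v⟫ ^ 2 + 2 * φ' (‖x - p‖ ^ 2) * ‖v‖ ^ 2 := by
    intro v
    have heq : (fun y => fderiv ℝ (φ ∘ q) y v) =ᶠ[𝓝 x] fun y => φ' (q y) * (2 * ⟪y - p, v⟫) := by
      filter_upwards [hqx.eventually hφ'] with y hy
      rw [(hy.comp_hasFDerivAt y (hq y)).fderiv]
      simp [inner_sub_left]
    have hder : HasFDerivAt (fun y => φ' (q y) * (2 * ⟪y - p, v⟫)) _ x :=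
      (hφ''.comp_hasFDerivAt x (hq x)).fun_mul
        ((((hasFDerivAt_id x).sub_const p).inner ℝ (hasFDerivAt_const v x)).const_mul 2)
    rw [heq.fderiv_eq, hder.fderiv]
    simp [q, inner_sub_left]
    ring
  have hparseval : ∑ i, ⟪x - p, b i⟫ ^ 2 = ‖x - p‖ ^ 2 := by
    simpa [sq, real_inner_comm, real_inner_self_eq_norm_sq] using
      b.sum_inner_mul_inner (x - p) (x - p)
  simp only [hdir, b.orthonormal.1, one_pow, mul_one, Finset.sum_add_distrib, ← Finset.mul_sum,
    hparseval, Finset.sum_const, Finset.card_univ, Fintype.card_fin, nsmul_eq_mul]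
  ring

theorem laplacian_norm_sq (x : E) : Δ (fun y : E => ‖y‖ ^ 2) x = 2 * finrank ℝ E := by
  simpa using laplacian_comp_norm_sub_sq (φ := id) (φ' := fun _ => 1) (φ'' := 0) (x := x) 0
    contDiffAt_id (Eventually.of_forall hasDerivAt_id) (hasDerivAt_const _ _)

theorem laplacian_inv_norm_sub {p : E} (hx : x ≠ p) :
    Δ (fun y => ‖y - p‖⁻¹) x = (3 - finrank ℝ E) * (‖x - p‖ ^ 2) ^ (-(3 / 2) : ℝ) := by
  have hs : 0 < ‖x - p‖ ^ 2 := by positivity [sub_ne_zero.2 hx]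
  have hrpow : ∀ v : E, ‖v‖⁻¹ = (‖v‖ ^ 2) ^ (-(1 / 2) : ℝ) := fun v => by
    rw [Real.rpow_neg (sq_nonneg _), ← Real.sqrt_eq_rpow, Real.sqrt_sq (norm_nonneg _)]
  simp_rw [hrpow]
  rw [laplacian_comp_norm_sub_sq p (Real.contDiffAt_rpow_const_of_ne hs.ne')
    ((eventually_ne_nhds hs.ne').mono fun s hs => Real.hasDerivAt_rpow_const (Or.inl hs))
    ((Real.hasDerivAt_rpow_const (Or.inl hs.ne')).const_mul _)]
  have hexp : (‖x - p‖ ^ 2) ^ (-(1 / 2) - 1 - 1 : ℝ) * ‖x - p‖ ^ 2 =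
      (‖x - p‖ ^ 2) ^ (-(3 / 2) : ℝ) := by
    rw [← Real.rpow_add_one hs.ne']; norm_num
  norm_num at hexp ⊢
  linear_combination (3 : ℝ) * hexp

theorem IsCompact.le_of_laplacian_nonpos [Nontrivial E] {K V : Set E} {u : E → ℝ} {m : ℝ}
    (hK : IsCompact K) (hV : IsOpen V) (hVK : V ⊆ K) (hu : ContinuousOn u K)
    (hΔ : ∀ y ∈ V, ContDiffAt ℝ 2 u y ∧ Δ u y ≤ 0) (hm : ∀ z ∈ K \ V, m ≤ u z) (hx : x ∈ K) :
    m ≤ u x := by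
  obtain ⟨C, hC⟩ := hK.bddAbove_image (continuous_norm.pow 2).continuousOn
  have hC0 : 0 ≤ C := (sq_nonneg ‖x‖).trans (hC ⟨x, hx, rfl⟩)
  have key : ∀ ε > 0, m ≤ u x + ε * C := by
    intro ε hε
    set w : E → ℝ := u - ε • fun y => ‖y‖ ^ 2
    have hq : ContDiff ℝ 2 (fun y : E => ‖y‖ ^ 2) := contDiff_norm_sq ℝ
    obtain ⟨z, hzK, hzmin⟩ := hK.exists_isMinOn ⟨x, hx⟩
      (hu.sub (hq.continuous.continuousOn.const_smul ε))
    have hzV : z ∉ V := by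
      intro hzV
      obtain ⟨hu2, hΔu⟩ := hΔ z hzV
      have hεq : ContDiffAt ℝ 2 (ε • fun y : E => ‖y‖ ^ 2) z := hq.contDiffAt.const_smul ε
      have hΔw : Δ w z = Δ u z - ε * (2 * finrank ℝ E) := by
        rw [hu2.laplacian_sub hεq, laplacian_smul ε hq.contDiffAt, laplacian_norm_sq, smul_eq_mul]
      have hmin := (hzmin.isLocalMin (mem_of_superset (hV.mem_nhds hzV) hVK)).laplacian_nonneg
        (hu2.sub hεq)
      have hdim : (0 : ℝ) < finrank ℝ E := by exact_mod_cast finrank_pos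
      nlinarith
    have hwz : w z ≤ w x := hzmin hx
    have hzC : ‖z‖ ^ 2 ≤ C := hC ⟨z, hzK, rfl⟩
    simp only [w, Pi.sub_apply, Pi.smul_apply, smul_eq_mul] at hwz
    nlinarith [hm z ⟨hzK, hzV⟩, sq_nonneg ‖x‖]
  refine le_of_forall_pos_le_add fun ε hε => ?_
  have hεC : ε / (C + 1) * C ≤ ε := by
    rw [div_mul_eq_mul_div, div_le_iff₀ (by positivity)]
    nlinarith
  linarith [key (ε / (C + 1)) (by positivity)]

theorem ContDiffAt.laplacian_eq_sum_fderiv_single {n : ℕ} {f : EuclideanSpace ℝ (Fin n) → ℝ}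
    {x : EuclideanSpace ℝ (Fin n)} (hf : ContDiffAt ℝ 2 f x) :
    Δ f x = ∑ i : Fin n, fderiv ℝ (fun y => fderiv ℝ f y (EuclideanSpace.single i 1)) x
      (EuclideanSpace.single i 1) := by
  simpa using hf.laplacian_eq_sum_fderiv_apply (EuclideanSpace.basisFun (Fin n) ℝ)

end Laplacian

theorem mem_sphere_or_exists_dist_eq_of_mem_sdiff {α ι : Type*} [PseudoMetricSpace α]
    {c z : α} {r δ : ℝ} {s : Set ι} {p : ι → α}
    (hz : z ∈ (closedBall c r \ ⋃ j ∈ s, ball (p j) δ) \ (ball c r \ ⋃ j ∈ s, closedBall (p j) δ)) :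
    z ∈ sphere c r ∨ ∃ j ∈ s, dist z (p j) = δ := by
  obtain ⟨⟨hzc, hzp⟩, hzV⟩ := hz
  by_cases hzr : z ∈ ball c r
  · obtain ⟨j, hj, hzj⟩ : ∃ j ∈ s, z ∈ closedBall (p j) δ := by
      by_contra! hcon
      exact hzV ⟨hzr, by simpa using hcon⟩
    exact .inr ⟨j, hj, le_antisymm hzj (not_lt.1 fun hlt => hzp (Set.mem_biUnion hj hlt))⟩
  · rw [← closedBall_sdiff_ball]
    exact .inl ⟨hzc, hzr⟩

theorem Finset.exists_pos_forall_lt_and_mul_lt {ι : Type*} (t : Finset ι) {a b : ι → ℝ}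
    (ha : ∀ j ∈ t, 0 < a j) (hb : ∀ j ∈ t, 0 < b j) (M : ℝ) :
    ∃ δ > 0, ∀ j ∈ t, δ < a j ∧ δ * M < b j := by
  have hsmall : ∀ᶠ δ in 𝓝 (0 : ℝ), ∀ j ∈ t, δ < a j ∧ δ * M < b j :=
    (eventually_all_finset t).2 fun j hj => (eventually_lt_nhds (ha j hj)).and
      (((continuous_id.mul continuous_const).tendsto' 0 0 (by simp)).eventually
        (eventually_lt_nhds (hb j hj)))
  exact ((hsmall.filter_mono nhdsWithin_le_nhds).and self_mem_nhdsWithin).exists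
    (f := 𝓝[>] 0) |>.imp fun δ hδ => ⟨hδ.2, hδ.1⟩

section NewtonianPotential

variable {ι E : Type*} [NormedAddCommGroup E]

noncomputable def newtonianPotential (t : Finset ι) (Λ : ι → ℝ) (p : ι → E) (y : E) : ℝ :=
  ∑ j ∈ t, Λ j / ‖y - p j‖

theorem le_newtonianPotential_Ico_add_of_norm_eq {N : ℕ} (hN : 2 ≤ N) {Λ : ℕ → ℝ} {p : ℕ → E}
    {h : E → ℝ} (hp0 : p 0 = 0) (hp1 : ‖p 1‖ = 1) (hΛ1 : 0 ≤ Λ 1) {z : E} {r : ℝ} (hr : 1 < r)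
    (hz : ‖z‖ = r) (hzp : ∀ i ∈ Finset.Ico 2 N, z ≠ p i)
    (hG : (∀ i < N, z ≠ p i) → 0 ≤ (∑ i ∈ Finset.range N, Λ i / ‖z - p i‖) + h z) :
    -(Λ 0 / r) - Λ 1 / (r - 1) ≤ newtonianPotential (Finset.Ico 2 N) Λ p z + h z := by
  have hG := hG fun i hi hzi => by
    rcases Nat.lt_or_ge i 2 with hi2 | hi2
    · interval_cases i
      · rw [hzi, hp0, norm_zero] at hz; linarith
      · rw [hzi, hp1] at hz; linarith
    · exact hzp i (Finset.mem_Ico.2 ⟨hi2, hi⟩) hzi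
  rw [Finset.range_eq_Ico, Finset.sum_eq_sum_Ico_succ_bot (by omega),
    Finset.sum_eq_sum_Ico_succ_bot (by omega), hp0, sub_zero, hz] at hG
  have h1 : Λ 1 / ‖z - p 1‖ ≤ Λ 1 / (r - 1) :=
    div_le_div_of_nonneg_left hΛ1 (by linarith) (by simpa [hz, hp1] using norm_sub_norm_le z (p 1))
  rw [newtonianPotential]
  linarith

variable {t : Finset ι} {Λ : ι → ℝ} {p : ι → E}

theorem div_le_newtonianPotential (hΛ : ∀ j ∈ t, 0 ≤ Λ j) {j : ι} (hj : j ∈ t) (y : E) :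
    Λ j / ‖y - p j‖ ≤ newtonianPotential t Λ p y :=
  Finset.single_le_sum (f := fun i => Λ i / ‖y - p i‖)
    (fun i hi => div_nonneg (hΛ i hi) (norm_nonneg _)) hj

variable [InnerProductSpace ℝ E] {x : E}

theorem contDiffAt_newtonianPotential {n : WithTop ℕ∞} (hx : ∀ j ∈ t, x ≠ p j) :
    ContDiffAt ℝ n (newtonianPotential t Λ p) x :=
  ContDiffAt.sum fun j hj => by
    simpa [div_eq_mul_inv] using contDiffAt_const.mul (contDiffAt_inv_norm_sub (hx j hj))

variable [FiniteDimensional ℝ E]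

theorem laplacian_newtonianPotential_nonpos (hE : 3 ≤ finrank ℝ E) (hΛ : ∀ j ∈ t, 0 ≤ Λ j)
    (hx : ∀ j ∈ t, x ≠ p j) : Δ (newtonianPotential t Λ p) x ≤ 0 := by
  have hterm : ∀ j ∈ t, Δ (fun y => Λ j / ‖y - p j‖) x =
      Λ j * ((3 - finrank ℝ E) * (‖x - p j‖ ^ 2) ^ (-(3 / 2) : ℝ)) := fun j hj => by
    have hsmul : (fun y => Λ j / ‖y - p j‖) = Λ j • fun y => ‖y - p j‖⁻¹ := by
      ext; simp [div_eq_mul_inv]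
    rw [hsmul, laplacian_smul _ (contDiffAt_inv_norm_sub (hx j hj)),
      laplacian_inv_norm_sub (hx j hj), smul_eq_mul]
  have hE' : (3 : ℝ) ≤ finrank ℝ E := by exact_mod_cast hE
  change Δ (fun y => ∑ j ∈ t, Λ j / ‖y - p j‖) x ≤ 0
  rw [laplacian_sum fun j hj => ?_, Finset.sum_congr rfl hterm]
  · exact Finset.sum_nonpos fun j hj => mul_nonpos_of_nonneg_of_nonpos (hΛ j hj)
      (mul_nonpos_of_nonpos_of_nonneg (by linarith) (by positivity))
  · simpa [div_eq_mul_inv] using contDiffAt_const.mul (contDiffAt_inv_norm_sub (hx j hj))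

theorem le_newtonianPotential_add_of_le_on_sphere (hE : 3 ≤ finrank ℝ E) {h : E → ℝ} {c : E}
    {r m : ℝ} (hΛ : ∀ j ∈ t, 0 < Λ j) (hh : ContinuousOn h (closedBall c r))
    (hΔh : ∀ y ∈ ball c r, ContDiffAt ℝ 2 h y ∧ Δ h y ≤ 0)
    (hm : ∀ z ∈ sphere c r, (∀ j ∈ t, z ≠ p j) → m ≤ newtonianPotential t Λ p z + h z)
    (hx : x ∈ closedBall c r) (hxp : ∀ j ∈ t, x ≠ p j) :
    m ≤ newtonianPotential t Λ p x + h x := by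
  have : Nontrivial E := Module.nontrivial_of_finrank_pos (R := ℝ) (by omega)
  obtain ⟨C, hC⟩ := (isCompact_closedBall c r).bddBelow_image hh
  -- the radius of the balls cut out around the poles: small enough to keep `x` outside them and
  -- to make the potential exceed `m - C` on their boundary
  obtain ⟨δ, hδpos, hδ⟩ := t.exists_pos_forall_lt_and_mul_lt (fun j hj => dist_pos.2 (hxp j hj))
    hΛ (m - C)
  set K := closedBall c r \ ⋃ j ∈ t, ball (p j) δ
  set V := ball c r \ ⋃ j ∈ t, closedBall (p j) δ
  have hVK : V ⊆ K := Set.sdiff_subset_sdiff ball_subset_closedBall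
    (Set.biUnion_mono subset_rfl fun j _ => ball_subset_closedBall)
  have hKp : ∀ y ∈ K, ∀ j ∈ t, y ≠ p j := fun y hy j hj hyp =>
    hy.2 (Set.mem_biUnion hj (hyp ▸ mem_ball_self hδpos))
  change m ≤ (newtonianPotential t Λ p + h) x
  refine ((isCompact_closedBall c r).diff (isOpen_biUnion fun j _ => isOpen_ball))
    |>.le_of_laplacian_nonpos
      (isOpen_ball.sdiff (isClosed_biUnion_finset fun j _ => isClosed_closedBall)) hVK
      (fun y hy => (contDiffAt_newtonianPotential (n := 0) (hKp y hy)).continuousAt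
        |>.continuousWithinAt.add (hh.mono Set.sdiff_subset y hy))
      (fun y hy => ?_) (fun z hz => ?_) ⟨hx, by simpa using fun j hj => (hδ j hj).1.le⟩
  · have hyp := hKp y (hVK hy)
    obtain ⟨hh2, hΔh2⟩ := hΔh y hy.1
    refine ⟨(contDiffAt_newtonianPotential hyp).add hh2, ?_⟩
    rw [(contDiffAt_newtonianPotential hyp).laplacian_add hh2]
    linarith [laplacian_newtonianPotential_nonpos hE (fun j hj => (hΛ j hj).le) hyp]
  · rcases mem_sphere_or_exists_dist_eq_of_mem_sdiff hz with hzr | ⟨j, hj, hzj⟩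
    · exact hm z hzr (hKp z hz.1)
    have hpot : Λ j / δ ≤ newtonianPotential t Λ p z := by
      simpa [← hzj, dist_eq_norm] using div_le_newtonianPotential (fun i hi => (hΛ i hi).le) hj z
    have hΛδ : m - C < Λ j / δ := by rw [lt_div_iff₀ hδpos]; linarith [(hδ j hj).2]
    have hCz : C ≤ h z := hC ⟨z, hz.1.1, rfl⟩
    show m ≤ newtonianPotential t Λ p z + h z
    linarith

end NewtonianPotential

theorem stmt11 (N : ℕ) (hN : 2 ≤ N) (R : ℝ) (hR : 2 < R)
    (Λ : ℕ → ℝ) (xt : ℕ → EuclideanSpace ℝ (Fin 3))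
    (hΛ0 : Λ 0 = Real.sqrt 3) (hx0 : xt 0 = 0)
    (hΛpos : ∀ i, 1 ≤ i → i < N → 0 < Λ i)
    (hx1 : ‖xt 1‖ = 1) (hxi : ∀ i, 1 ≤ i → i < N → 1 ≤ ‖xt i‖)
    (Ht : EuclideanSpace ℝ (Fin 3) → ℝ)
    (hHsmooth : ContDiffOn ℝ 2 Ht (ball (0 : EuclideanSpace ℝ (Fin 3)) R))
    (hHharm : ∀ x ∈ ball (0 : EuclideanSpace ℝ (Fin 3)) R,
      (∑ i : Fin 3, fderiv ℝ (fun y => fderiv ℝ Ht y (EuclideanSpace.single i 1)) x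
        (EuclideanSpace.single i 1)) = 0)
    (hGnonneg : ∀ x ∈ ball (0 : EuclideanSpace ℝ (Fin 3)) R,
      (∀ i < N, x ≠ xt i) →
      0 ≤ (∑ i ∈ Finset.range N, Λ i / ‖x - xt i‖) + Ht x) :
    Λ 1 - Real.sqrt 3 / R - Λ 1 / (R - 1) ≤
      (∑ i ∈ Finset.Ico 1 N, Λ i / ‖xt i‖) + Ht 0 := by
  set t := Finset.Ico 2 N
  have hΛt : ∀ j ∈ t, 0 < Λ j := fun j hj => hΛpos j (by grind) (Finset.mem_Ico.1 hj).2
  have hpoles : ∀ j ∈ t, (0 : EuclideanSpace ℝ (Fin 3)) ≠ xt j := fun j hj h0 => by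
    have := hxi j (by grind) (Finset.mem_Ico.1 hj).2
    norm_num [← h0] at this
  have hbound : ∀ r ∈ Set.Ioo 2 R,
      -(Λ 0 / r) - Λ 1 / (r - 1) ≤ newtonianPotential t Λ xt 0 + Ht 0 := by
    rintro r ⟨hr2, hrR⟩
    have hsub : closedBall (0 : EuclideanSpace ℝ (Fin 3)) r ⊆ ball 0 R :=
      closedBall_subset_ball hrR
    refine le_newtonianPotential_add_of_le_on_sphere (by simp) hΛt
      (hHsmooth.continuousOn.mono hsub) (fun y hy => ?_) (fun z hz hzp => ?_)
      (mem_closedBall_self (by linarith)) hpoles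
    · have hyR : y ∈ ball 0 R := hsub (ball_subset_closedBall hy)
      have hH2 : ContDiffAt ℝ 2 Ht y := hHsmooth.contDiffAt (isOpen_ball.mem_nhds hyR)
      exact ⟨hH2, (hH2.laplacian_eq_sum_fderiv_single.trans (hHharm y hyR)).le⟩
    · exact le_newtonianPotential_Ico_add_of_norm_eq hN hx0 hx1 (hΛpos 1 le_rfl (by omega)).le
        (by linarith) (by simpa using hz) hzp (hGnonneg z (hsub (sphere_subset_closedBall hz)))
  have hcont : ContinuousAt (fun r : ℝ => -(Λ 0 / r) - Λ 1 / (r - 1)) R :=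
    (continuousAt_const.div continuousAt_id (by positivity)).neg.sub
      (continuousAt_const.div (continuousAt_id.sub continuousAt_const) (by linarith))
  have hlim := hcont.le_of_forall_mem_Ioo_le hR hbound
  rw [Finset.sum_eq_sum_Ico_succ_bot (by omega), hx1, div_one]
  simp only [newtonianPotential, zero_sub, norm_neg, hΛ0] at hlim
  linarith
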